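/- arXiv:1411.4103 — 2 statements merged into one kernel-verified Lean document; each statement's English description precedes it below -/
import Mathlib

section
/- Let V be a 4-dimensional real vector space and J : V → V a linear map with J ∘ J = −id. If α is a J-anti-invariant alternating 2-form on V and β is a J-invariant alternating 2-form on V, then the wedge product α ∧ β vanishes as an alternating 4-form on V; equivalently, for all x₁,x₂,x₃,x₄ ∈ V, α(x₁,x₂)β(x₃,x₄) − α(x₁,x₃)β(x₂,x₄) + α(x₁,x₄)β(x₂,x₃) + α(x₂,x₃)β(x₁,x₄) − α(x₂,x₄)β(x₁,x₃) + α(x₃,x₄)β(x₁,x₂) = 0. -/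
open LinearMap

set_option maxHeartbeats 1000000 in
/-- Let `V` be a 4-dimensional real vector space and `J : V → V` linear
with `J ∘ J = -id`.  If `α` is a `J`-anti-invariant alternating 2-form on `V` and `β` is
a `J`-invariant alternating 2-form on `V`, then the wedge product `α ∧ β` vanishes as an
alternating 4-form on `V`. -/
theorem stmt4 {V : Type*} [AddCommGroup V] [Module ℝ V]
    [FiniteDimensional ℝ V] (hV : Module.finrank ℝ V = 4)
    (J : V →ₗ[ℝ] V) (hJ : J ∘ₗ J = -LinearMap.id)
    (α β : V →ₗ[ℝ] V →ₗ[ℝ] ℝ)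
    (hαalt : ∀ x, α x x = 0) (hβalt : ∀ x, β x x = 0)
    (hα : ∀ x y, α (J x) (J y) = - α x y)
    (hβ : ∀ x y, β (J x) (J y) = β x y) :
    ∀ x₁ x₂ x₃ x₄ : V,
      α x₁ x₂ * β x₃ x₄ - α x₁ x₃ * β x₂ x₄ + α x₁ x₄ * β x₂ x₃
        + α x₂ x₃ * β x₁ x₄ - α x₂ x₄ * β x₁ x₃ + α x₃ x₄ * β x₁ x₂ = 0 := by
  classical
  have hJ2 : ∀ x : V, J (J x) = -x := fun x => by
    have h := LinearMap.ext_iff.mp hJ x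
    simpa using h
  have hA : ∀ x y : V, α y x = -α x y := by
    intro x y
    have h := hαalt (x + y)
    simp only [map_add, LinearMap.add_apply, hαalt] at h
    linarith
  have hB : ∀ x y : V, β y x = -β x y := by
    intro x y
    have h := hβalt (x + y)
    simp only [map_add, LinearMap.add_apply, hβalt] at h
    linarith
  -- swap lemmas for the 6-term expression E
  have sw12 : ∀ a b c d : V,
      α a b * β c d - α a c * β b d + α a d * β b c
        + α b c * β a d - α b d * β a c + α c d * β a b
      = -(α b a * β c d - α b c * β a d + α b d * β a c
        + α a c * β b d - α a d * β b c + α c d * β b a) := by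
    intro a b c d
    linear_combination (β c d) * hA a b + (α c d) * hB a b
  have sw23 : ∀ a b c d : V,
      α a b * β c d - α a c * β b d + α a d * β b c
        + α b c * β a d - α b d * β a c + α c d * β a b
      = -(α a c * β b d - α a b * β c d + α a d * β c b
        + α c b * β a d - α c d * β a b + α b d * β a c) := by
    intro a b c d
    linear_combination (α a d) * hB b c + (β a d) * hA b c
  have sw34 : ∀ a b c d : V,
      α a b * β c d - α a c * β b d + α a d * β b c
        + α b c * β a d - α b d * β a c + α c d * β a b
      = -(α a b * β d c - α a d * β b c + α a c * β b d
        + α b d * β a c - α b c * β a d + α d c * β a b) := by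
    intro a b c d
    linear_combination (β a b) * hA c d + (α a b) * hB c d
  -- zero lemmas: E vanishes when two arguments coincide
  have z12 : ∀ a c d : V,
      α a a * β c d - α a c * β a d + α a d * β a c
        + α a c * β a d - α a d * β a c + α c d * β a a = 0 := by
    intro a c d
    linear_combination (β c d) * hαalt a + (α c d) * hβalt a
  have z23 : ∀ a b d : V,
      α a b * β b d - α a b * β b d + α a d * β b b
        + α b b * β a d - α b d * β a b + α b d * β a b = 0 := by
    intro a b d
    linear_combination (α a d) * hβalt b + (β a d) * hαalt b
  have z34 : ∀ a b c : V,
      α a b * β c c - α a c * β b c + α a c * β b c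
        + α b c * β a c - α b c * β a c + α c c * β a b = 0 := by
    intro a b c
    linear_combination (β a b) * hαalt c + (α a b) * hβalt c
  have z13 : ∀ a b d : V,
      α a b * β a d - α a a * β b d + α a d * β b a
        + α b a * β a d - α b d * β a a + α a d * β a b = 0 := by
    intro a b d
    have h := sw12 a b a d
    have h2 := z12 a b d
    linarith [h, h2, sw23 b a a d]
  have z14 : ∀ a b c : V,
      α a b * β c a - α a c * β b a + α a a * β b c
        + α b c * β a a - α b a * β a c + α c a * β a b = 0 := by
    intro a b c
    linarith [sw34 a b c a, z13 a b c]
  have z24 : ∀ a b c : V,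
      α a b * β c b - α a c * β b b + α a b * β b c
        + α b c * β a b - α b b * β a c + α c b * β a b = 0 := by
    intro a b c
    linarith [sw34 a b c b, z23 a b c]
  have : Nontrivial V := Module.nontrivial_of_finrank_pos (R := ℝ) (by omega)
  obtain ⟨e, he⟩ := exists_ne (0 : V)
  obtain ⟨f, hf⟩ : ∃ f, f ∉ Submodule.span ℝ {e, J e} := by
    by_contra h
    push_neg at h
    have htop : Submodule.span ℝ {e, J e} = ⊤ := Submodule.eq_top_iff'.mpr h
    have h1 : Module.finrank ℝ ↥(Submodule.span ℝ ({e, J e} : Set V)) ≤ 2 := by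
      have hle := finrank_span_le_card (R := ℝ) ({e, J e} : Set V)
      refine hle.trans ?_
      refine (Finset.card_le_card ?_).trans (show ({e, J e} : Finset V).card ≤ 2 from
        (Finset.card_insert_le _ _).trans (by simp))
      intro x hx
      simpa using (Set.mem_toFinset.mp hx)
    rw [htop, finrank_top, hV] at h1
    omega
  have li : LinearIndependent ℝ ![e, J e, f, J f] := by
    rw [Fintype.linearIndependent_iff]
    intro g hg
    have hsum : g 0 • e + g 1 • J e + g 2 • f + g 3 • J f = 0 := by
      simpa [Fin.sum_univ_four, add_assoc] using hg
    have hsum2 : g 0 • J e + g 1 • (-e) + g 2 • J f + g 3 • (-f) = 0 := by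
      have h := congrArg J hsum
      simpa [map_add, map_smul, hJ2] using h
    have h2z : g 2 = 0 ∧ g 3 = 0 := by
      by_contra hc
      have hcc : g 2 ^ 2 + g 3 ^ 2 ≠ 0 := by
        rcases not_and_or.mp hc with h' | h' <;> positivity
      apply hf
      have expand : (g 2 ^ 2 + g 3 ^ 2) • f + (g 0 * g 2 + g 1 * g 3) • e
            + (g 1 * g 2 - g 0 * g 3) • J e
          = g 2 • (g 0 • e + g 1 • J e + g 2 • f + g 3 • J f)
            - g 3 • (g 0 • J e + g 1 • (-e) + g 2 • J f + g 3 • (-f)) := by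
        module
      rw [hsum, hsum2] at expand
      simp only [smul_zero, sub_zero] at expand
      have h4 : (g 2 ^ 2 + g 3 ^ 2) • f = (-(g 0 * g 2 + g 1 * g 3)) • e
          + (-(g 1 * g 2 - g 0 * g 3)) • J e := by
        linear_combination (norm := module) expand
      have hfval : f = ((g 2 ^ 2 + g 3 ^ 2)⁻¹ * -(g 0 * g 2 + g 1 * g 3)) • e
          + ((g 2 ^ 2 + g 3 ^ 2)⁻¹ * -(g 1 * g 2 - g 0 * g 3)) • J e := by
        calc f = (g 2 ^ 2 + g 3 ^ 2)⁻¹ • ((g 2 ^ 2 + g 3 ^ 2) • f) := by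
              rw [smul_smul, inv_mul_cancel₀ hcc, one_smul]
          _ = _ := by rw [h4, smul_add, smul_smul, smul_smul]
      exact Submodule.mem_span_pair.mpr ⟨_, _, hfval.symm⟩
    obtain ⟨h2, h3⟩ := h2z
    rw [h2, h3] at hsum hsum2
    simp only [zero_smul, add_zero] at hsum hsum2
    have he0 : (g 0 ^ 2 + g 1 ^ 2) • e = 0 := by
      have expand2 : (g 0 ^ 2 + g 1 ^ 2) • e
          = g 0 • (g 0 • e + g 1 • J e) - g 1 • (g 0 • J e + g 1 • (-e)) := by
        module
      rw [hsum, hsum2] at expand2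
      simpa using expand2
    have h01 : g 0 ^ 2 + g 1 ^ 2 = 0 := by
      rcases smul_eq_zero.mp he0 with h | h
      · exact h
      · exact absurd h he
    have h0 : g 0 = 0 := by nlinarith [sq_nonneg (g 0), sq_nonneg (g 1)]
    have h1 : g 1 = 0 := by nlinarith [sq_nonneg (g 0), sq_nonneg (g 1)]
    intro i
    fin_cases i <;> assumption
  have hcard : Fintype.card (Fin 4) = Module.finrank ℝ V := by simp [hV]
  let b := basisOfLinearIndependentOfCardEqFinrank li hcard
  have hb : ⇑b = ![e, J e, f, J f] := coe_basisOfLinearIndependentOfCardEqFinrank li hcard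
  -- the wedge as a multilinear map
  let T : MultilinearMap ℝ (fun _ : Fin 4 => V) ℝ :=
    { toFun := fun v => α (v 0) (v 1) * β (v 2) (v 3) - α (v 0) (v 2) * β (v 1) (v 3)
        + α (v 0) (v 3) * β (v 1) (v 2) + α (v 1) (v 2) * β (v 0) (v 3)
        - α (v 1) (v 3) * β (v 0) (v 2) + α (v 2) (v 3) * β (v 0) (v 1)
      map_update_add' := by
        intro inst v i x y
        obtain rfl : inst = instDecidableEqFin 4 := Subsingleton.elim _ _
        fin_cases i <;>
          simp [Function.update_apply, Fin.ext_iff, show ((3:Fin 4):ℕ) = 3 from rfl, map_add] <;> ring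
      map_update_smul' := by
        intro inst v i c x
        obtain rfl : inst = instDecidableEqFin 4 := Subsingleton.elim _ _
        fin_cases i <;>
          simp [Function.update_apply, Fin.ext_iff, show ((3:Fin 4):ℕ) = 3 from rfl, map_smul, smul_eq_mul] <;> ring }
  -- the wedge as an alternating map
  let S : V [⋀^Fin 4]→ₗ[ℝ] ℝ :=
    { T with
      map_eq_zero_of_eq' := by
        intro v i j hv hij
        show α (v 0) (v 1) * β (v 2) (v 3) - α (v 0) (v 2) * β (v 1) (v 3)
            + α (v 0) (v 3) * β (v 1) (v 2) + α (v 1) (v 2) * β (v 0) (v 3)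
            - α (v 1) (v 3) * β (v 0) (v 2) + α (v 2) (v 3) * β (v 0) (v 1) = 0
        fin_cases i <;> fin_cases j <;>
          first
          | exact absurd rfl hij
          | (rw [show v 0 = v 1 from hv]; exact z12 _ _ _)
          | (rw [show v 1 = v 0 from hv]; exact z12 _ _ _)
          | (rw [show v 0 = v 2 from hv]; exact z13 _ _ _)
          | (rw [show v 2 = v 0 from hv]; exact z13 _ _ _)
          | (rw [show v 0 = v 3 from hv]; exact z14 _ _ _)
          | (rw [show v 3 = v 0 from hv]; exact z14 _ _ _)
          | (rw [show v 1 = v 2 from hv]; exact z23 _ _ _)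
          | (rw [show v 2 = v 1 from hv]; exact z23 _ _ _)
          | (rw [show v 1 = v 3 from hv]; exact z24 _ _ _)
          | (rw [show v 3 = v 1 from hv]; exact z24 _ _ _)
          | (rw [show v 2 = v 3 from hv]; exact z34 _ _ _)
          | (rw [show v 3 = v 2 from hv]; exact z34 _ _ _) }
  have hSb : S ⇑b = 0 := by
    rw [hb]
    show α e (J e) * β f (J f) - α e f * β (J e) (J f) + α e (J f) * β (J e) f
        + α (J e) f * β e (J f) - α (J e) (J f) * β e f + α f (J f) * β e (J e) = 0
    have h1 : α (J e) (J (J e)) * β (J f) (J (J f)) - α (J e) (J f) * β (J (J e)) (J (J f))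
          + α (J e) (J (J f)) * β (J (J e)) (J f) + α (J (J e)) (J f) * β (J e) (J (J f))
          - α (J (J e)) (J (J f)) * β (J e) (J f) + α (J f) (J (J f)) * β (J e) (J (J e))
        = -(α e (J e) * β f (J f) - α e f * β (J e) (J f) + α e (J f) * β (J e) f
          + α (J e) f * β e (J f) - α (J e) (J f) * β e f + α f (J f) * β e (J e)) := by
      simp only [hα, hβ]
      ring
    rw [hJ2 e, hJ2 f] at h1
    simp only [map_neg, LinearMap.neg_apply] at h1
    linear_combination (1/2) * h1 - (1/2) * (β (J f) f) * hA e (J e)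
      + (1/2) * (α e (J e)) * hB f (J f) - (1/2) * (β (J e) e) * hA f (J f)
      + (1/2) * (α f (J f)) * hB e (J e)
  have hS := S.eq_smul_basis_det b
  intro x₁ x₂ x₃ x₄
  have hv := DFunLike.congr_fun hS ![x₁, x₂, x₃, x₄]
  rw [hSb] at hv
  simp only [zero_smul, AlternatingMap.zero_apply] at hv
  exact hv
end

section
/- For real constants C, D > 0, set A := C/D and B := 1/(CD) (so that C² = A/B and D² = 1/(AB)). Then the space of J_{C,D}-anti-invariant alternating 2-forms on ℝ⁴ is exactly the 2-dimensional span of B e¹³ − e²⁴ and e¹⁴ + A e²³. -/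
open LinearMap

noncomputable section

/-- The alternating 2-form `eⁱ ∧ eʲ` on `ℝ⁴`, `e^{ij}(x,y) = xᵢ yⱼ - xⱼ yᵢ`. -/
def eF (i j : Fin 4) : (Fin 4 → ℝ) →ₗ[ℝ] (Fin 4 → ℝ) →ₗ[ℝ] ℝ :=
  LinearMap.mk₂ ℝ (fun x y => x i * y j - x j * y i)
    (fun x x' y => by simp; ring)
    (fun c x y => by simp; ring)
    (fun x y y' => by simp; ring)
    (fun c x y => by simp; ring)

/-- The linear map `J_{C,D}` on `ℝ⁴`, with `J e₁ = (1/C) e₂`, `J e₂ = -C e₁`,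
`J e₃ = (1/D) e₄`, `J e₄ = -D e₃`. -/
def Jcd (C D : ℝ) : (Fin 4 → ℝ) →ₗ[ℝ] (Fin 4 → ℝ) where
  toFun x := ![-C * x 1, C⁻¹ * x 0, -D * x 3, D⁻¹ * x 2]
  map_add' x y := by funext i; fin_cases i <;> simp <;> ring
  map_smul' c x := by funext i; fin_cases i <;> simp <;> ring

/-- The subspace of `J`-anti-invariant alternating 2-forms on `ℝ⁴`. -/
def antiSub (J : (Fin 4 → ℝ) →ₗ[ℝ] (Fin 4 → ℝ)) :
    Submodule ℝ ((Fin 4 → ℝ) →ₗ[ℝ] (Fin 4 → ℝ) →ₗ[ℝ] ℝ) where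
  carrier := {α | (∀ x, α x x = 0) ∧ ∀ x y, α (J x) (J y) = - α x y}
  add_mem' := by
    rintro a b ⟨ha, ha'⟩ ⟨hb, hb'⟩
    refine ⟨fun x => by simp [ha x, hb x], fun x y => by simp [ha' x y, hb' x y]; ring⟩
  zero_mem' := ⟨fun x => rfl, fun x y => by simp⟩
  smul_mem' := by
    rintro c a ⟨ha, ha'⟩
    exact ⟨fun x => by simp [ha x], fun x y => by simp [ha' x y]⟩

/-! Evaluating `α (J x) (J y) = -α x y` on the basis pairs (e₁,e₂), (e₃,e₄), (e₁,e₃), (e₁,e₄)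
gives `α₁₂ = α₃₄ = 0`, `α₂₄ = -CD α₁₃` and `α₂₃ = (C/D) α₁₄`, so an anti-invariant 2-form is
`CD α₁₃ (B e¹³ - e²⁴) + α₁₄ (e¹⁴ + A e²³)`. Conversely both generators are anti-invariant, and
evaluation at (e₁,e₃) and (e₁,e₄) separates them. -/

section AntiInvariantForms

variable {C D : ℝ}

-- `𝐞 i` is the basis vector `e_{i+1}`: Lean indexes the coordinates of `ℝ⁴` from `0`.
local notation "𝐞" i:max => (Pi.single i (1 : ℝ) : Fin 4 → ℝ)

lemma eF_apply (i j : Fin 4) (x y : Fin 4 → ℝ) : eF i j x y = x i * y j - x j * y i := rfl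

lemma Jcd_apply (x : Fin 4 → ℝ) : Jcd C D x = ![-C * x 1, C⁻¹ * x 0, -D * x 3, D⁻¹ * x 2] := rfl

lemma Jcd_single_zero : Jcd C D (𝐞 0) = C⁻¹ • 𝐞 1 := by
  funext i; fin_cases i <;> simp [Jcd]

lemma Jcd_single_one : Jcd C D (𝐞 1) = -C • 𝐞 0 := by
  funext i; fin_cases i <;> simp [Jcd]

lemma Jcd_single_two : Jcd C D (𝐞 2) = D⁻¹ • 𝐞 3 := by
  funext i; fin_cases i <;> simp [Jcd]

lemma Jcd_single_three : Jcd C D (𝐞 3) = -D • 𝐞 2 := by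
  funext i; fin_cases i <;> simp [Jcd]

lemma apply_single_single_of_mem_antiSub (hC : C ≠ 0) (hD : D ≠ 0)
    {α : (Fin 4 → ℝ) →ₗ[ℝ] (Fin 4 → ℝ) →ₗ[ℝ] ℝ} (hα : α ∈ antiSub (Jcd C D)) :
    α (𝐞 0) (𝐞 1) = 0 ∧ α (𝐞 2) (𝐞 3) = 0 ∧
      α (𝐞 1) (𝐞 3) = -(C * D) * α (𝐞 0) (𝐞 2) ∧ α (𝐞 1) (𝐞 2) = C / D * α (𝐞 0) (𝐞 3) := by
  obtain ⟨hAlt, hJ⟩ : α.IsAlt ∧ _ := hα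
  have h01 := hJ (𝐞 0) (𝐞 1)
  have h23 := hJ (𝐞 2) (𝐞 3)
  have h02 := hJ (𝐞 0) (𝐞 2)
  have h03 := hJ (𝐞 0) (𝐞 3)
  simp only [Jcd_single_zero, Jcd_single_one, Jcd_single_two, Jcd_single_three, map_smul,
    LinearMap.smul_apply, smul_eq_mul, ← hAlt.neg (𝐞 0) (𝐞 1),
    ← hAlt.neg (𝐞 2) (𝐞 3)] at h01 h23 h02 h03
  refine ⟨?_, ?_, ?_, ?_⟩
  · field_simp at h01; linarith
  · field_simp at h23; linarith
  · field_simp at h02; linarith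
  · field_simp at h03; field_simp; linarith

lemma eq_smul_add_smul_of_mem_antiSub (hC : C ≠ 0) (hD : D ≠ 0)
    {α : (Fin 4 → ℝ) →ₗ[ℝ] (Fin 4 → ℝ) →ₗ[ℝ] ℝ} (hα : α ∈ antiSub (Jcd C D)) :
    α = (C * D * α (𝐞 0) (𝐞 2)) • ((1 / (C * D)) • eF 0 2 - eF 1 3) +
      α (𝐞 0) (𝐞 3) • (eF 0 3 + (C / D) • eF 1 2) := by
  obtain ⟨h01, h23, h13, h12⟩ := apply_single_single_of_mem_antiSub hC hD hα
  have hAlt : α.IsAlt := hα.1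
  refine LinearMap.ext_basis (Pi.basisFun ℝ (Fin 4)) (Pi.basisFun ℝ (Fin 4)) fun i j => ?_
  fin_cases i <;> fin_cases j <;>
    simp [eF, hAlt.self_eq_zero, ← hAlt.neg (𝐞 0), ← hAlt.neg (𝐞 1) (𝐞 2), ← hAlt.neg (𝐞 1) (𝐞 3),
      ← hAlt.neg (𝐞 2) (𝐞 3), h01, h23, h13, h12] <;> field_simp

lemma smul_eF_sub_eF_mem_antiSub (hC : C ≠ 0) (hD : D ≠ 0) :
    (1 / (C * D)) • eF 0 2 - eF 1 3 ∈ antiSub (Jcd C D) := by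
  refine ⟨fun x => ?_, fun x y => ?_⟩ <;>
    simp only [LinearMap.sub_apply, LinearMap.smul_apply, eF_apply, Jcd_apply, smul_eq_mul,
      Matrix.cons_val]
  · ring
  · field_simp
    ring

lemma eF_add_smul_eF_mem_antiSub (hC : C ≠ 0) (hD : D ≠ 0) :
    eF 0 3 + (C / D) • eF 1 2 ∈ antiSub (Jcd C D) := by
  refine ⟨fun x => ?_, fun x y => ?_⟩ <;>
    simp only [LinearMap.add_apply, LinearMap.smul_apply, eF_apply, Jcd_apply, smul_eq_mul,
      Matrix.cons_val]
  · ring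
  · field_simp
    ring

lemma linearIndependent_antiSub_generators {A B : ℝ} (hB : B ≠ 0) :
    LinearIndependent ℝ ![B • eF 0 2 - eF 1 3, eF 0 3 + A • eF 1 2] := by
  refine (LinearIndependent.pair_iff (R := ℝ) (x := B • eF 0 2 - eF 1 3)
    (y := eF 0 3 + A • eF 1 2)).2 fun s t hst => ?_
  have h02 : s * B = 0 := by simpa [eF] using congr($hst (𝐞 0) (𝐞 2))
  have h03 : t = 0 := by simpa [eF] using congr($hst (𝐞 0) (𝐞 3))
  exact ⟨(mul_eq_zero.1 h02).resolve_right hB, h03⟩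

lemma antiSub_Jcd_eq_span (hC : C ≠ 0) (hD : D ≠ 0) :
    antiSub (Jcd C D) =
      Submodule.span ℝ {(1 / (C * D)) • eF 0 2 - eF 1 3, eF 0 3 + (C / D) • eF 1 2} := by
  refine le_antisymm (fun α hα => ?_) (Submodule.span_le.2 ?_)
  · rw [eq_smul_add_smul_of_mem_antiSub hC hD hα]
    exact add_mem (Submodule.smul_mem _ _ (Submodule.subset_span (by simp)))
      (Submodule.smul_mem _ _ (Submodule.subset_span (by simp)))
  · rintro _ (rfl | rfl)
    exacts [smul_eF_sub_eF_mem_antiSub hC hD, eF_add_smul_eF_mem_antiSub hC hD]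

end AntiInvariantForms

/-- For real constants `C, D > 0`, set `A := C/D` and `B := 1/(CD)`
(so that `C² = A/B` and `D² = 1/(AB)`).  Then the space of `J_{C,D}`-anti-invariant
alternating 2-forms on `ℝ⁴` is exactly the 2-dimensional span of `B e¹³ - e²⁴` and
`e¹⁴ + A e²³`. -/
theorem stmt11 (C D : ℝ) (hC : 0 < C) (hD : 0 < D)
    (A B : ℝ) (hA : A = C / D) (hB : B = 1 / (C * D)) :
    antiSub (Jcd C D) =
      Submodule.span ℝ {B • eF 0 2 - eF 1 3, eF 0 3 + A • eF 1 2} ∧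
    Module.finrank ℝ (antiSub (Jcd C D)) = 2 := by
  subst hA hB
  have hspan := antiSub_Jcd_eq_span hC.ne' hD.ne'
  refine ⟨hspan, ?_⟩
  rw [hspan, ← Matrix.range_cons_cons_empty _ _ ![],
    finrank_span_eq_card (linearIndependent_antiSub_generators (by positivity)), Fintype.card_fin]
end
end
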